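/- Assume in addition that J is differentiable on [0, t]. Let v₀ ∈ (0, t) be the unique zero of G. Then F is strictly increasing on the interval [v₀, t]. -/

import Mathlib

/-!
Write `F = J - α W` with `W v = ∫_v^t g(s) e^{-β(s-v)} ds` and `g = e^J - 1 ≥ 0`. Then
`W' = β W - g ≤ β ∫_v^t g - g = -G`, and `G ≥ 0` on `[v₀, t]` because `G t = g t > 0` and `v₀` is
the only zero of `G`. So `W` is antitone on `[v₀, t]`, and `F` inherits strict monotonicity from `J`.
-/

open MeasureTheory Real Set

theorem le_of_forall_ne_Ioo {α δ : Type*} [ConditionallyCompleteLinearOrder α]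
    [TopologicalSpace α] [OrderTopology α] [DenselyOrdered α] [LinearOrder δ] [TopologicalSpace δ]
    [OrderClosedTopology δ] {f : α → δ} {a b : α} {c : δ} (hf : ContinuousOn f (Icc a b))
    (ha : c ≤ f a) (hb : c < f b) (hne : ∀ x ∈ Ioo a b, f x ≠ c) {x : α} (hx : x ∈ Icc a b) :
    c ≤ f x := by
  rcases hx.1.eq_or_lt with rfl | hax
  · exact ha
  by_contra! hfx
  obtain ⟨z, hz, hfz⟩ :=
    intermediate_value_Icc hx.2 (hf.mono (Icc_subset_Icc hax.le le_rfl)) ⟨hfx.le, hb.le⟩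
  rcases hz.2.eq_or_lt with rfl | hzb
  · exact hb.ne' hfz
  · exact hne z ⟨hax.trans_le hz.1, hzb⟩ hfz

theorem integral_mul_exp_neg_mul_sub (g : ℝ → ℝ) (β v b : ℝ) :
    ∫ s in v..b, g s * exp (-β * (s - v)) = exp (β * v) * ∫ s in v..b, g s * exp (-β * s) := by
  rw [← intervalIntegral.integral_const_mul]
  refine intervalIntegral.integral_congr fun s _ => ?_
  rw [show -β * (s - v) = β * v + -β * s by ring, exp_add]
  ring

theorem hasDerivAt_integral_mul_exp_neg_mul_sub {g : ℝ → ℝ} (hg : Continuous g) (β b v : ℝ) :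
    HasDerivAt (fun v => ∫ s in v..b, g s * exp (-β * (s - v)))
      (β * (∫ s in v..b, g s * exp (-β * (s - v))) - g v) v := by
  have hcont : Continuous fun s => g s * exp (-β * s) := by fun_prop
  have hprim : HasDerivAt (fun v => ∫ s in v..b, g s * exp (-β * s)) (-(g v * exp (-β * v))) v :=
    intervalIntegral.integral_hasDerivAt_left (hcont.intervalIntegrable v b)
      (hcont.stronglyMeasurableAtFilter _ _) hcont.continuousAt
  have hexp : HasDerivAt (fun v => exp (β * v)) (exp (β * v) * β) v :=
    ((hasDerivAt_id v).const_mul β).exp.congr_deriv (by simp)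
  simp only [integral_mul_exp_neg_mul_sub g β]
  refine (hexp.mul hprim).congr_deriv ?_
  have : exp (β * v) * exp (-β * v) = 1 := by rw [← exp_add]; ring_nf; exact exp_zero
  linear_combination (-g v) * this

theorem integral_mul_exp_neg_mul_sub_le {g : ℝ → ℝ} (hg : Continuous g) {β v b : ℝ} (hβ : 0 ≤ β)
    (hvb : v ≤ b) (hg0 : ∀ s ∈ Icc v b, 0 ≤ g s) :
    ∫ s in v..b, g s * exp (-β * (s - v)) ≤ ∫ s in v..b, g s := by
  have hcont : Continuous fun s => g s * exp (-β * (s - v)) := by fun_prop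
  refine intervalIntegral.integral_mono_on hvb (hcont.intervalIntegrable v b)
    (hg.intervalIntegrable v b) fun s hs => mul_le_of_le_one_right (hg0 s hs) ?_
  exact exp_le_one_iff.2 (by nlinarith [hs.1])

theorem antitoneOn_integral_mul_exp_neg_mul_sub {g : ℝ → ℝ} (hg : Continuous g) {β a b : ℝ}
    (hβ : 0 ≤ β) (hg0 : ∀ s ∈ Icc a b, 0 ≤ g s)
    (hdom : ∀ v ∈ Icc a b, β * ∫ s in v..b, g s ≤ g v) :
    AntitoneOn (fun v => ∫ s in v..b, g s * exp (-β * (s - v))) (Icc a b) := by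
  have hderiv := hasDerivAt_integral_mul_exp_neg_mul_sub hg β b
  refine antitoneOn_of_deriv_nonpos (convex_Icc a b)
    (fun v _ => (hderiv v).continuousAt.continuousWithinAt)
    (fun v _ => (hderiv v).differentiableAt.differentiableWithinAt) fun v hv => ?_
  rw [interior_Icc] at hv
  have hle := integral_mul_exp_neg_mul_sub_le hg hβ hv.2.le
    fun s hs => hg0 s ⟨hv.1.le.trans hs.1, hs.2⟩
  rw [(hderiv v).deriv]
  nlinarith [hdom v (Ioo_subset_Icc_self hv)]

theorem F_strictMonoOn_of_G_zero_general
    (T t α β : ℝ) (ht : 0 < t) (htT : t ≤ T)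
    (hα : 0 < α) (hβ : 0 < β)
    (J : ℝ → ℝ) (hJcont : Continuous J)
    (hJmono : StrictMonoOn J (Set.Icc 0 T)) (hJ0 : J 0 = 0)
    (G F : ℝ → ℝ)
    (hG : ∀ v, G v = (Real.exp (J v) - 1) - β * ∫ s in v..t, (Real.exp (J s) - 1))
    (hF : ∀ v, F v = J v - α * ∫ s in v..t, (Real.exp (J s) - 1) * Real.exp (-β * (s - v)))
    (v₀ : ℝ) (hv₀ : v₀ ∈ Set.Ioo 0 t) (hGv₀ : G v₀ = 0)
    (hv₀uniq : ∀ w ∈ Set.Ioo 0 t, G w = 0 → w = v₀) :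
    StrictMonoOn F (Set.Icc v₀ t) := by
  obtain ⟨hv₀0, hv₀t⟩ := hv₀
  have hJ : StrictMonoOn J (Icc v₀ t) := hJmono.mono (Icc_subset_Icc hv₀0.le htT)
  have hJpos : ∀ s ∈ Ioc 0 t, 0 < J s := fun s hs =>
    hJ0 ▸ hJmono ⟨le_rfl, ht.le.trans htT⟩ ⟨hs.1.le, hs.2.trans htT⟩ hs.1
  have hg0 : ∀ s ∈ Icc v₀ t, 0 ≤ exp (J s) - 1 := fun s hs =>
    sub_nonneg.2 (one_le_exp (hJpos s ⟨hv₀0.trans_le hs.1, hs.2⟩).le)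
  have hGcont : ContinuousOn G (Icc v₀ t) := by
    have hprim := intervalIntegral.continuousOn_primitive_interval_left (μ := volume)
      (f := fun s => exp (J s) - 1) (Continuous.integrableOn_uIcc (a := v₀) (b := t) (by fun_prop))
    rw [uIcc_of_le hv₀t.le] at hprim
    simp only [funext hG]
    exact (Continuous.continuousOn (by fun_prop)).sub (continuousOn_const.mul hprim)
  have hGt : 0 < G t := by
    simpa [hG] using hJpos t ⟨ht, le_rfl⟩
  have hGnn : ∀ v ∈ Icc v₀ t, 0 ≤ G v := fun v => le_of_forall_ne_Ioo hGcont hGv₀.ge hGt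
    fun w hw hGw => hw.1.ne' (hv₀uniq w ⟨hv₀0.trans hw.1, hw.2⟩ hGw)
  have hW := antitoneOn_integral_mul_exp_neg_mul_sub (g := fun s => exp (J s) - 1)
    (by fun_prop) hβ.le hg0 fun v hv => by linarith [hGnn v hv, hG v]
  rw [show F = fun v => J v + -(α * ∫ s in v..t, (exp (J s) - 1) * exp (-β * (s - v))) from
    funext fun v => (hF v).trans (sub_eq_add_neg _ _)]
  exact hJ.add_monotone fun x hx y hy hxy =>
    neg_le_neg (mul_le_mul_of_nonneg_left (hW hx hy hxy) hα.le)

/-- If moreover `J` is differentiable on `[0, t]` and `v₀ ∈ (0, t)` is the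
unique zero of `G`, then `F` is strictly increasing on `[v₀, t]`. -/
theorem F_strictMonoOn_of_G_zero
    (T t α β : ℝ) (hT : 0 < T) (ht : 0 < t) (htT : t ≤ T)
    (hα : 0 < α) (hβ : 0 < β)
    (J : ℝ → ℝ) (hJcont : Continuous J)
    (hJmono : StrictMonoOn J (Set.Icc 0 T)) (hJ0 : J 0 = 0)
    (hJdiff : DifferentiableOn ℝ J (Set.Icc 0 t))
    (G F : ℝ → ℝ)
    (hG : ∀ v, G v = (Real.exp (J v) - 1) - β * ∫ s in v..t, (Real.exp (J s) - 1))
    (hF : ∀ v, F v = J v - α * ∫ s in v..t, (Real.exp (J s) - 1) * Real.exp (-β * (s - v)))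
    (v₀ : ℝ) (hv₀ : v₀ ∈ Set.Ioo 0 t) (hGv₀ : G v₀ = 0)
    (hv₀uniq : ∀ w ∈ Set.Ioo 0 t, G w = 0 → w = v₀) :
    StrictMonoOn F (Set.Icc v₀ t) :=
  F_strictMonoOn_of_G_zero_general T t α β ht htT hα hβ J hJcont hJmono hJ0 G F hG hF v₀ hv₀ hGv₀
    hv₀uniq
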